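/- Let A be a finite subset of an additive group G with φ(A) = 1 such that 2a ∉ A for every nonzero a ∈ A, and suppose 2b = 0 for all b ∈ A. Then either A = {0}, or A ∪ {0} is a 2-torsion subgroup of G not containing any element of A equal to 0. -/

import Mathlib

/-!
Since `φ(A) = 1`, no pair of distinct elements of `A` is sum-avoiding, so `A` is closed under
sums of distinct elements. If `0 ∈ A`, then every nonzero `a ∈ A` would give `2a = 0 ∈ A`,
so `A = {0}`. Otherwise `A ∪ {0}` is closed under addition (`a + a = 0`) and negation
(`-a = a`), hence a 2-torsion subgroup.
-/

/-- `phi A` is the maximum cardinality of a subset `B ⊆ A` that is sum-avoiding in `A`. -/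
def phi {G : Type*} [AddCommGroup G] [DecidableEq G] (A : Finset G) : ℕ :=
  ((A.powerset).filter (fun B => ∀ b₁ ∈ B, ∀ b₂ ∈ B, b₁ ≠ b₂ → b₁ + b₂ ∉ A)).sup Finset.card

theorem add_mem_of_phi_le_one {G : Type*} [AddCommGroup G] [DecidableEq G] {A : Finset G}
    (hphi : phi A ≤ 1) {a b : G} (ha : a ∈ A) (hb : b ∈ A) (hab : a ≠ b) : a + b ∈ A := by
  by_contra hsum
  have hpair : ({a, b} : Finset G) ∈ A.powerset.filter
      (fun B => ∀ b₁ ∈ B, ∀ b₂ ∈ B, b₁ ≠ b₂ → b₁ + b₂ ∉ A) := by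
    refine Finset.mem_filter.2 ⟨Finset.mem_powerset.2 (Finset.insert_subset ha
      (Finset.singleton_subset_iff.2 hb)), ?_⟩
    simp only [Finset.mem_insert, Finset.mem_singleton]
    rintro b₁ (rfl | rfl) b₂ (rfl | rfl) hne <;> simp_all [add_comm]
  have hcard : ({a, b} : Finset G).card = 2 := Finset.card_pair hab
  have := Finset.le_sup (f := Finset.card) hpair
  rw [hcard] at this
  exact absurd (this.trans hphi) (by norm_num)

namespace AddSubgroup

variable {G : Type*} [AddCommGroup G]

def ofTwoTorsionAddClosed (S : Set G) (hadd : ∀ x ∈ S, ∀ y ∈ S, x ≠ y → x + y ∈ S)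
    (htor : ∀ x ∈ S, 2 • x = 0) : AddSubgroup G where
  carrier := S ∪ {0}
  zero_mem' := Or.inr rfl
  add_mem' := by
    rintro x y (hx | rfl) (hy | rfl)
    · by_cases hxy : x = y
      · subst hxy
        exact Or.inr (by rw [← two_nsmul]; exact htor x hx)
      · exact Or.inl (hadd x hx y hy hxy)
    · exact Or.inl (by simpa using hx)
    · exact Or.inl (by simpa using hy)
    · simp
  neg_mem' := by
    rintro x (hx | rfl)
    · rw [neg_eq_of_add_eq_zero_left (by rw [← two_nsmul]; exact htor x hx)]
      exact Or.inl hx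
    · simp

theorem two_nsmul_eq_zero_of_mem_ofTwoTorsionAddClosed {S : Set G}
    {hadd : ∀ x ∈ S, ∀ y ∈ S, x ≠ y → x + y ∈ S} {htor : ∀ x ∈ S, 2 • x = 0} {x : G}
    (hx : x ∈ ofTwoTorsionAddClosed S hadd htor) : 2 • x = 0 := by
  rcases hx with hx | rfl
  · exact htor x hx
  · simp

end AddSubgroup

theorem two_torsion_case {G : Type*} [AddCommGroup G] [DecidableEq G]
    (A : Finset G) (hphi : phi A = 1)
    (h2a : ∀ a ∈ A, a ≠ 0 → 2 • a ∉ A)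
    (htor : ∀ b ∈ A, 2 • b = 0) :
    A = {0} ∨
    (∃ H : AddSubgroup G, (∀ x ∈ H, 2 • x = 0) ∧
      (H : Set G) = ↑A ∪ {0} ∧ (0 : G) ∉ A) := by
  by_cases h0 : (0 : G) ∈ A
  · refine Or.inl (Finset.eq_singleton_iff_unique_mem.2 ⟨h0, fun a ha => ?_⟩)
    by_contra ha0
    exact h2a a ha ha0 (by rwa [htor a ha])
  · refine Or.inr ⟨AddSubgroup.ofTwoTorsionAddClosed (A : Set G)
      (fun x hx y hy hxy => add_mem_of_phi_le_one hphi.le hx hy hxy) htor,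
      fun x hx => AddSubgroup.two_nsmul_eq_zero_of_mem_ofTwoTorsionAddClosed hx, rfl, h0⟩
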